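/- LTLEBR is strictly less expressive than safetyLTL: every ω-language definable by an LTLEBR formula is definable by a safetyLTL formula, but there is an ω-language (namely L(G(p₁ ∨ G(p₂)))) definable in safetyLTL and not in LTLEBR; i.e. ⟦LTLEBR⟧ ⊊ ⟦safetyLTL⟧. -/

import Mathlib

/-- Syntax of LTL with Past (LTL+P) over proposition letters of type `α`. -/
inductive Formula (α : Type) : Type
  | atom  : α → Formula α                       -- proposition letter
  | not   : Formula α → Formula α               -- ¬
  | or    : Formula α → Formula α → Formula α   -- ∨
  | and   : Formula α → Formula α → Formula α   -- ∧
  | next  : Formula α → Formula α               -- X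
  | untl  : Formula α → Formula α → Formula α   -- U
  | rels  : Formula α → Formula α → Formula α   -- R
  | ev    : Formula α → Formula α               -- F
  | glob  : Formula α → Formula α               -- G
  | yest  : Formula α → Formula α               -- Y
  | wyest : Formula α → Formula α               -- Z
  | since : Formula α → Formula α → Formula α   -- S
  | trig  : Formula α → Formula α → Formula α   -- T
  | once  : Formula α → Formula α               -- O
  | hist  : Formula α → Formula α               -- H

namespace Formula

/-- Satisfaction `σ, i ⊨ φ` of an LTL+P formula by a state sequence
(an infinite word `σ : ℕ → Set α`) at position `i`. -/
def Sat {α : Type} (σ : ℕ → Set α) : Formula α → ℕ → Prop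
  | .atom p, i => p ∈ σ i
  | .not φ, i => ¬ Sat σ φ i
  | .or φ ψ, i => Sat σ φ i ∨ Sat σ ψ i
  | .and φ ψ, i => Sat σ φ i ∧ Sat σ ψ i
  | .next φ, i => Sat σ φ (i + 1)
  | .untl φ ψ, i => ∃ j, i ≤ j ∧ Sat σ ψ j ∧ ∀ k, i ≤ k → k < j → Sat σ φ k
  | .rels φ ψ, i => (∀ j, i ≤ j → Sat σ ψ j) ∨
      (∃ n, i ≤ n ∧ Sat σ φ n ∧ ∀ m, i ≤ m → m ≤ n → Sat σ ψ m)
  | .ev φ, i => ∃ j, i ≤ j ∧ Sat σ φ j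
  | .glob φ, i => ∀ j, i ≤ j → Sat σ φ j
  | .yest φ, i => 0 < i ∧ Sat σ φ (i - 1)
  | .wyest φ, i => i = 0 ∨ Sat σ φ (i - 1)
  | .since φ ψ, i => ∃ j, j ≤ i ∧ Sat σ ψ j ∧ ∀ k, j < k → k ≤ i → Sat σ φ k
  | .trig φ ψ, i => (∀ j, j ≤ i → Sat σ ψ j) ∨
      (∃ n, n ≤ i ∧ Sat σ φ n ∧ ∀ m, n ≤ m → m ≤ i → Sat σ ψ m)
  | .once φ, i => ∃ j, j ≤ i ∧ Sat σ φ j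
  | .hist φ, i => ∀ j, j ≤ i → Sat σ φ j

/-- The ω-language of a formula: the set of state sequences satisfying it at position 0. -/
def Lang {α : Type} (φ : Formula α) : Set (ℕ → Set α) := {σ | Sat σ φ 0}

end Formula

open Formula

/-- `σ_{[0,i]} · σ'` : the infinite word whose first `i+1` letters come from `σ`
and which then continues as `σ'`. -/
def extendPrefix {α : Type} (σ : ℕ → Set α) (i : ℕ) (σ' : ℕ → Set α) : ℕ → Set α :=
  fun n => if n ≤ i then σ n else σ' (n - (i + 1))

/-- `L` is a safety ω-language: every word not in `L` has a finite prefix all of whose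
infinite extensions are not in `L`. -/
def IsSafety {α : Type} (L : Set (ℕ → Set α)) : Prop :=
  ∀ σ : ℕ → Set α, σ ∉ L → ∃ i : ℕ, ∀ σ' : ℕ → Set α, extendPrefix σ i σ' ∉ L

/-- `X^n φ`. -/
def nextPow {α : Type} : ℕ → Formula α → Formula α
  | 0, φ => φ
  | n + 1, φ => .next (nextPow n φ)

/-- `⋀_{j=0}^{n} X^j φ`. -/
def nextChain {α : Type} (φ : Formula α) : ℕ → Formula α
  | 0 => φ
  | n + 1 => .and (nextChain φ n) (nextPow (n + 1) φ)

/-- The `i`-th disjunct of the bounded until: `X^i ψ₂ ∧ ⋀_{j=0}^{i-1} X^j ψ₁`. -/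
def buntilTerm {α : Type} (ψ₁ ψ₂ : Formula α) : ℕ → Formula α
  | 0 => ψ₂
  | n + 1 => .and (nextPow (n + 1) ψ₂) (nextChain ψ₁ n)

/-- Bounded until `ψ₁ U^[a,b] ψ₂ = ⋁_{i=a}^{b} (X^i ψ₂ ∧ ⋀_{j=0}^{i-1} X^j ψ₁)`. -/
def buntil {α : Type} (a b : ℕ) (ψ₁ ψ₂ : Formula α) : Formula α :=
  ((List.range' (a + 1) (b - a)).map (buntilTerm ψ₁ ψ₂)).foldl .or (buntilTerm ψ₁ ψ₂ a)

/-- Pure past layer of LTLEBR+P : `η ::= p | ¬η | η∨η | Yη | ηSη`. -/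
inductive PurePastL {α : Type} : Formula α → Prop
  | atom (p : α) : PurePastL (.atom p)
  | not {φ} : PurePastL φ → PurePastL (.not φ)
  | or {φ ψ} : PurePastL φ → PurePastL ψ → PurePastL (.or φ ψ)
  | yest {φ} : PurePastL φ → PurePastL (.yest φ)
  | since {φ ψ} : PurePastL φ → PurePastL ψ → PurePastL (.since φ ψ)

/-- Bounded future layer over a base: `ψ ::= base | ¬ψ | ψ∨ψ | Xψ | ψ U^[a,b] ψ`. -/
inductive BFLayer {α : Type} (base : Formula α → Prop) : Formula α → Prop
  | base {φ} : base φ → BFLayer base φ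
  | not {φ} : BFLayer base φ → BFLayer base (.not φ)
  | or {φ ψ} : BFLayer base φ → BFLayer base ψ → BFLayer base (.or φ ψ)
  | next {φ} : BFLayer base φ → BFLayer base (.next φ)
  | bu (a b : ℕ) {φ ψ} : BFLayer base φ → BFLayer base ψ → BFLayer base (buntil a b φ ψ)

/-- Future layer: `φ ::= ψ | φ∧φ | Xφ | Gφ | ψRφ`. -/
inductive FLayer {α : Type} (base : Formula α → Prop) : Formula α → Prop
  | bf {φ} : BFLayer base φ → FLayer base φ
  | and {φ ψ} : FLayer base φ → FLayer base ψ → FLayer base (.and φ ψ)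
  | next {φ} : FLayer base φ → FLayer base (.next φ)
  | glob {φ} : FLayer base φ → FLayer base (.glob φ)
  | rels {φ ψ} : BFLayer base φ → FLayer base ψ → FLayer base (.rels φ ψ)

/-- Boolean layer: `χ ::= φ | χ∨χ | χ∧χ`. -/
inductive BLayer {α : Type} (base : Formula α → Prop) : Formula α → Prop
  | f {φ} : FLayer base φ → BLayer base φ
  | or {φ ψ} : BLayer base φ → BLayer base ψ → BLayer base (.or φ ψ)
  | and {φ ψ} : BLayer base φ → BLayer base ψ → BLayer base (.and φ ψ)

/-- LTLEBR+P formulas: layered grammar whose innermost layer is the pure past layer. -/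
def IsLTLEBRP {α : Type} (φ : Formula α) : Prop := BLayer PurePastL φ

/-- LTLEBR formulas: LTLEBR+P without the pure past layer
(the bounded future layer starts from proposition letters). -/
def IsLTLEBR {α : Type} (φ : Formula α) : Prop :=
  BLayer (fun ψ => ∃ p, ψ = Formula.atom p) φ

/-- Formulas with no past operators (pure future LTL). -/
def FutureOnly {α : Type} : Formula α → Prop
  | .atom _ => True
  | .not φ => FutureOnly φ
  | .or φ ψ => FutureOnly φ ∧ FutureOnly ψ
  | .and φ ψ => FutureOnly φ ∧ FutureOnly ψ
  | .next φ => FutureOnly φ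
  | .untl φ ψ => FutureOnly φ ∧ FutureOnly ψ
  | .rels φ ψ => FutureOnly φ ∧ FutureOnly ψ
  | .ev φ => FutureOnly φ
  | .glob φ => FutureOnly φ
  | .yest _ => False
  | .wyest _ => False
  | .since _ _ => False
  | .trig _ _ => False
  | .once _ => False
  | .hist _ => False

/-- Negated normal form: `nnf b φ` is the NNF of `φ` if `b = false`, of `¬φ` if `b = true`. -/
def nnf {α : Type} : Bool → Formula α → Formula α
  | false, .atom p => .atom p
  | true, .atom p => .not (.atom p)
  | b, .not φ => nnf (!b) φ
  | false, .or φ ψ => .or (nnf false φ) (nnf false ψ)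
  | true, .or φ ψ => .and (nnf true φ) (nnf true ψ)
  | false, .and φ ψ => .and (nnf false φ) (nnf false ψ)
  | true, .and φ ψ => .or (nnf true φ) (nnf true ψ)
  | b, .next φ => .next (nnf b φ)
  | false, .untl φ ψ => .untl (nnf false φ) (nnf false ψ)
  | true, .untl φ ψ => .rels (nnf true φ) (nnf true ψ)
  | false, .rels φ ψ => .rels (nnf false φ) (nnf false ψ)
  | true, .rels φ ψ => .untl (nnf true φ) (nnf true ψ)
  | false, .ev φ => .ev (nnf false φ)
  | true, .ev φ => .glob (nnf true φ)
  | false, .glob φ => .glob (nnf false φ)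
  | true, .glob φ => .ev (nnf true φ)
  | false, .yest φ => .yest (nnf false φ)
  | true, .yest φ => .wyest (nnf true φ)
  | false, .wyest φ => .wyest (nnf false φ)
  | true, .wyest φ => .yest (nnf true φ)
  | false, .since φ ψ => .since (nnf false φ) (nnf false ψ)
  | true, .since φ ψ => .trig (nnf true φ) (nnf true ψ)
  | false, .trig φ ψ => .trig (nnf false φ) (nnf false ψ)
  | true, .trig φ ψ => .since (nnf true φ) (nnf true ψ)
  | false, .once φ => .once (nnf false φ)
  | true, .once φ => .hist (nnf true φ)
  | false, .hist φ => .hist (nnf false φ)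
  | true, .hist φ => .once (nnf true φ)

/-- The formula contains no until (`U`) and no eventually (`F`) operator. -/
def NoUF {α : Type} : Formula α → Prop
  | .atom _ => True
  | .not φ => NoUF φ
  | .or φ ψ => NoUF φ ∧ NoUF ψ
  | .and φ ψ => NoUF φ ∧ NoUF ψ
  | .next φ => NoUF φ
  | .untl _ _ => False
  | .rels φ ψ => NoUF φ ∧ NoUF ψ
  | .ev _ => False
  | .glob φ => NoUF φ
  | .yest φ => NoUF φ
  | .wyest φ => NoUF φ
  | .since φ ψ => NoUF φ ∧ NoUF ψ
  | .trig φ ψ => NoUF φ ∧ NoUF ψ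
  | .once φ => NoUF φ
  | .hist φ => NoUF φ

/-- safetyLTL: pure-future LTL formulas whose negated normal form
contains no `U` and no `F`. -/
def IsSafetyLTL {α : Type} (φ : Formula α) : Prop :=
  FutureOnly φ ∧ NoUF (nnf false φ)

/-- LTLBP (bounded past LTL): Boolean combinations of proposition letters
and yesterday operators. -/
inductive IsLTLBP {α : Type} : Formula α → Prop
  | atom (p : α) : IsLTLBP (.atom p)
  | not {φ} : IsLTLBP φ → IsLTLBP (.not φ)
  | or {φ ψ} : IsLTLBP φ → IsLTLBP ψ → IsLTLBP (.or φ ψ)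
  | and {φ ψ} : IsLTLBP φ → IsLTLBP ψ → IsLTLBP (.and φ ψ)
  | yest {φ} : IsLTLBP φ → IsLTLBP (.yest φ)

/-- Temporal depth `D` of an LTLBP formula. -/
def depth {α : Type} : Formula α → ℕ
  | .not φ => depth φ
  | .or φ ψ => max (depth φ) (depth ψ)
  | .and φ ψ => max (depth φ) (depth ψ)
  | .yest φ => depth φ + 1
  | _ => 0

/-- canLTLEBR: the canonical form of LTLEBR, i.e. `∧/∨`-combinations of formulas
`X^n α`, `X^n G α`, `X^n (α R β)` with `α, β` LTLBP formulas. -/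
inductive IsCanLTLEBR {α : Type} : Formula α → Prop
  | bp {φ} (n : ℕ) : IsLTLBP φ → IsCanLTLEBR (nextPow n φ)
  | glob {φ} (n : ℕ) : IsLTLBP φ → IsCanLTLEBR (nextPow n (.glob φ))
  | rels {φ ψ} (n : ℕ) : IsLTLBP φ → IsLTLBP ψ → IsCanLTLEBR (nextPow n (.rels φ ψ))
  | and {φ ψ} : IsCanLTLEBR φ → IsCanLTLEBR ψ → IsCanLTLEBR (.and φ ψ)
  | or {φ ψ} : IsCanLTLEBR φ → IsCanLTLEBR ψ → IsCanLTLEBR (.or φ ψ)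

/-- Maximum number of nested next (`X`) operators (for canonical-form formulas). -/
def nextDepth {α : Type} : Formula α → ℕ
  | .next φ => nextDepth φ + 1
  | .not φ => nextDepth φ
  | .or φ ψ => max (nextDepth φ) (nextDepth ψ)
  | .and φ ψ => max (nextDepth φ) (nextDepth ψ)
  | .glob φ => nextDepth φ
  | .rels φ ψ => max (nextDepth φ) (nextDepth ψ)
  | .yest φ => nextDepth φ
  | _ => 0

/-- Maximum temporal depth among LTLBP subformulas (for canonical-form formulas). -/
def bpDepth {α : Type} : Formula α → ℕ
  | .next φ => bpDepth φ
  | .glob φ => depth φ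
  | .rels φ ψ => max (depth φ) (depth ψ)
  | .and φ ψ => max (bpDepth φ) (bpDepth ψ)
  | .or φ ψ => max (bpDepth φ) (bpDepth ψ)
  | φ => depth φ

/-- The interval `σ_{[n-d, n]}` of `σ`, as a finite word: it starts at
`max (n-d) 0` and ends at `n`. -/
def window {α : Type} (σ : ℕ → Set α) (d n : ℕ) : List (Set α) :=
  (List.range (min d n + 1)).map (fun t => σ (n - min d n + t))

/-- A pure past formula: all of its temporal operators are past operators. -/
def IsPurePast {α : Type} : Formula α → Prop
  | .atom _ => True
  | .not φ => IsPurePast φ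
  | .or φ ψ => IsPurePast φ ∧ IsPurePast ψ
  | .and φ ψ => IsPurePast φ ∧ IsPurePast ψ
  | .next _ => False
  | .untl _ _ => False
  | .rels _ _ => False
  | .ev _ => False
  | .glob _ => False
  | .yest φ => IsPurePast φ
  | .wyest φ => IsPurePast φ
  | .since φ ψ => IsPurePast φ ∧ IsPurePast ψ
  | .trig φ ψ => IsPurePast φ ∧ IsPurePast ψ
  | .once φ => IsPurePast φ
  | .hist φ => IsPurePast φ

/-- The two-letter alphabet Σ = {p₁, p₂}. -/
inductive PP : Type
  | p1 : PP
  | p2 : PP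
deriving DecidableEq

/-- The state sequence `^{i,k}σ^j`: its `h`-th state is `{p₁}` if `h ∈ {i,k}`,
`{p₂}` if `h = j`, and `{p₁,p₂}` otherwise. -/
def sig (i k j : ℕ) : ℕ → Set PP := fun h =>
  if h = i ∨ h = k then {PP.p1} else if h = j then {PP.p2} else {PP.p1, PP.p2}

/-- The formula `G (p₁ ∨ G p₂)`. -/
def phiG : Formula PP :=
  .glob (.or (.atom PP.p1) (.glob (.atom PP.p2)))


/-!
Every LTLEBR formula is syntactically a safetyLTL formula: negation only occurs in the bounded
future layer, which unfolds into Boolean combinations of `X`-prefixed letters.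

For the separation, pushing `X` inwards (`X G φ ≡ G X φ`, `X (ψ R φ) ≡ X ψ R X φ`) turns every
future-layer formula into a combination, by `∧`, `G` and `R` with a local left argument, of
predicates that only read a window of some width `W`. Such a predicate transfers from `σ` to `σ'`
along a monotone map `f` with `u ≤ f u` which matches the `W`-window of `σ` at `u` with that of
`σ'` at `f u`, and such that every `W`-window of `σ'` starting at or before `f u` occurs in `σ` at
or before `u`: if it holds on `σ` at all positions `≤ y`, it holds on `σ'` at all positions `≤ f y`.
For `Q > W` the words `^{Q,Q}σ^{2Q}`, a model of `G (p₁ ∨ G p₂)`, and `^{Q,3Q}σ^{2Q}`, which is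
not, are related by such a map, so no LTLEBR formula defines `L(G (p₁ ∨ G p₂))`.
-/

section Fragments

variable {α : Type}

inductive IsBoolNext : Formula α → Prop
  | atom (p : α) : IsBoolNext (.atom p)
  | not {φ} : IsBoolNext φ → IsBoolNext (.not φ)
  | or {φ ψ} : IsBoolNext φ → IsBoolNext ψ → IsBoolNext (.or φ ψ)
  | and {φ ψ} : IsBoolNext φ → IsBoolNext ψ → IsBoolNext (.and φ ψ)
  | next {φ} : IsBoolNext φ → IsBoolNext (.next φ)

namespace IsBoolNext

variable {φ ψ : Formula α}

theorem nextPow (h : IsBoolNext φ) : ∀ n, IsBoolNext (nextPow n φ)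
  | 0 => h
  | n + 1 => .next (h.nextPow n)

theorem nextChain (h : IsBoolNext φ) : ∀ n, IsBoolNext (nextChain φ n)
  | 0 => h
  | n + 1 => .and (h.nextChain n) (h.nextPow (n + 1))

theorem buntilTerm (h₁ : IsBoolNext φ) (h₂ : IsBoolNext ψ) : ∀ n, IsBoolNext (buntilTerm φ ψ n)
  | 0 => h₂
  | n + 1 => .and (h₂.nextPow (n + 1)) (h₁.nextChain n)

theorem foldl_or {l : List (Formula α)} (h : IsBoolNext φ) (hl : ∀ ψ ∈ l, IsBoolNext ψ) :
    IsBoolNext (l.foldl .or φ) := by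
  induction l generalizing φ with
  | nil => exact h
  | cons ψ l ih =>
    exact ih (.or h (hl ψ List.mem_cons_self)) fun χ hχ => hl χ (List.mem_cons_of_mem ψ hχ)

theorem buntil (h₁ : IsBoolNext φ) (h₂ : IsBoolNext ψ) (a b : ℕ) :
    IsBoolNext (buntil a b φ ψ) := by
  refine foldl_or (h₁.buntilTerm h₂ a) fun χ hχ => ?_
  obtain ⟨n, -, rfl⟩ := List.mem_map.1 hχ
  exact h₁.buntilTerm h₂ n

theorem nnf_noUF (h : IsBoolNext φ) :
    FutureOnly φ ∧ NoUF (nnf false φ) ∧ NoUF (nnf true φ) := by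
  induction h with
  | atom => exact ⟨trivial, trivial, trivial⟩
  | not _ ih => exact ⟨ih.1, ih.2.2, ih.2.1⟩
  | or _ _ ih₁ ih₂ | and _ _ ih₁ ih₂ =>
    exact ⟨⟨ih₁.1, ih₂.1⟩, ⟨ih₁.2.1, ih₂.2.1⟩, ⟨ih₁.2.2, ih₂.2.2⟩⟩
  | next _ ih => exact ih

end IsBoolNext

variable {φ : Formula α}

theorem BFLayer.isBoolNext (h : BFLayer (fun ψ => ∃ p, ψ = Formula.atom p) φ) :
    IsBoolNext φ := by
  induction h with
  | base h => obtain ⟨p, rfl⟩ := h; exact .atom p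
  | not _ ih => exact .not ih
  | or _ _ ih₁ ih₂ => exact .or ih₁ ih₂
  | next _ ih => exact .next ih
  | bu a b _ _ ih₁ ih₂ => exact ih₁.buntil ih₂ a b

theorem FLayer.isSafetyLTL (h : FLayer (fun ψ => ∃ p, ψ = Formula.atom p) φ) :
    IsSafetyLTL φ := by
  induction h with
  | bf h => exact ⟨h.isBoolNext.nnf_noUF.1, h.isBoolNext.nnf_noUF.2.1⟩
  | and _ _ ih₁ ih₂ => exact ⟨⟨ih₁.1, ih₂.1⟩, ⟨ih₁.2, ih₂.2⟩⟩
  | next _ ih | glob _ ih => exact ih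
  | rels h _ ih => exact ⟨⟨h.isBoolNext.nnf_noUF.1, ih.1⟩, ⟨h.isBoolNext.nnf_noUF.2.1, ih.2⟩⟩

theorem IsLTLEBR.isSafetyLTL (h : IsLTLEBR φ) : IsSafetyLTL φ := by
  induction h with
  | f h => exact h.isSafetyLTL
  | or _ _ ih₁ ih₂ | and _ _ ih₁ ih₂ => exact ⟨⟨ih₁.1, ih₂.1⟩, ⟨ih₁.2, ih₂.2⟩⟩

theorem isSafetyLTL_phiG : IsSafetyLTL phiG :=
  ⟨⟨trivial, trivial⟩, ⟨trivial, trivial⟩⟩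

end Fragments

section Transfer

variable {α : Type}

abbrev WordPred (α : Type) : Type := (ℕ → Set α) → ℕ → Prop

def IsLocal (W : ℕ) (p : WordPred α) : Prop :=
  ∀ σ i σ' i', (∀ d ≤ W, σ (i + d) = σ' (i' + d)) → (p σ i ↔ p σ' i')

def shiftPred (p : WordPred α) : WordPred α := fun σ i => p σ (i + 1)

def globPred (p : WordPred α) : WordPred α := fun σ i => ∀ j, i ≤ j → p σ j

def relsPred (a b : WordPred α) : WordPred α := fun σ i =>
  (∀ j, i ≤ j → b σ j) ∨ (∃ n, i ≤ n ∧ a σ n ∧ ∀ m, i ≤ m → m ≤ n → b σ m)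

theorem Nat.forall_succ_le_iff {P : ℕ → Prop} {i : ℕ} :
    (∀ j, i + 1 ≤ j → P j) ↔ ∀ j, i ≤ j → P (j + 1) := by
  refine ⟨fun h j hj => h (j + 1) (by omega), fun h j hj => ?_⟩
  obtain ⟨k, rfl⟩ : ∃ k, j = k + 1 := ⟨j - 1, by omega⟩
  exact h k (by omega)

theorem Nat.exists_succ_le_iff {P : ℕ → Prop} {i : ℕ} :
    (∃ j, i + 1 ≤ j ∧ P j) ↔ ∃ j, i ≤ j ∧ P (j + 1) := by
  refine ⟨fun ⟨j, hj, h⟩ => ?_, fun ⟨j, hj, h⟩ => ⟨j + 1, by omega, h⟩⟩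
  obtain ⟨k, rfl⟩ : ∃ k, j = k + 1 := ⟨j - 1, by omega⟩
  exact ⟨k, by omega, h⟩

theorem shiftPred_globPred (p : WordPred α) :
    shiftPred (globPred p) = globPred (shiftPred p) := by
  ext σ i
  exact Nat.forall_succ_le_iff

theorem shiftPred_relsPred (a b : WordPred α) :
    shiftPred (relsPred a b) = relsPred (shiftPred a) (shiftPred b) := by
  ext σ i
  simp only [shiftPred, relsPred, Nat.forall_succ_le_iff, Nat.exists_succ_le_iff,
    Nat.add_le_add_iff_right]

theorem relsPred.right {a b : WordPred α} {σ : ℕ → Set α} {i : ℕ} (h : relsPred a b σ i) :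
    b σ i :=
  h.elim (fun h => h i le_rfl) fun ⟨_, hin, _, h⟩ => h i le_rfl hin

namespace IsLocal

variable {W : ℕ} {p : WordPred α}

theorem mono (h : IsLocal W p) {W' : ℕ} (hW : W ≤ W') : IsLocal W' p :=
  fun σ i σ' i' hσ => h σ i σ' i' fun d hd => hσ d (hd.trans hW)

theorem shift (h : IsLocal W p) : IsLocal (W + 1) (shiftPred p) := fun σ i σ' i' hσ =>
  h σ (i + 1) σ' (i' + 1) fun d hd => by
    simpa only [Nat.add_assoc, Nat.add_comm 1 d] using hσ (d + 1) (by omega)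

end IsLocal

theorem IsBoolNext.isLocal {φ : Formula α} (h : IsBoolNext φ) :
    ∃ W, IsLocal W (fun σ i => Sat σ φ i) := by
  induction h with
  | atom p => exact ⟨0, fun σ i σ' i' hσ => iff_of_eq (congrArg (p ∈ ·) (hσ 0 le_rfl))⟩
  | not _ ih =>
    obtain ⟨W, hW⟩ := ih
    exact ⟨W, fun σ i σ' i' hσ => not_congr (hW σ i σ' i' hσ)⟩
  | or _ _ ih₁ ih₂ =>
    obtain ⟨W₁, h₁⟩ := ih₁
    obtain ⟨W₂, h₂⟩ := ih₂
    exact ⟨max W₁ W₂, fun σ i σ' i' hσ => or_congr (h₁.mono (le_max_left _ _) σ i σ' i' hσ)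
      (h₂.mono (le_max_right _ _) σ i σ' i' hσ)⟩
  | and _ _ ih₁ ih₂ =>
    obtain ⟨W₁, h₁⟩ := ih₁
    obtain ⟨W₂, h₂⟩ := ih₂
    exact ⟨max W₁ W₂, fun σ i σ' i' hσ => and_congr (h₁.mono (le_max_left _ _) σ i σ' i' hσ)
      (h₂.mono (le_max_right _ _) σ i σ' i' hσ)⟩
  | next _ ih =>
    obtain ⟨W, hW⟩ := ih
    exact ⟨W + 1, hW.shift⟩

inductive IsWindowSafe (W : ℕ) : WordPred α → Prop
  | ofLocal {p} : IsLocal W p → IsWindowSafe W p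
  | and {p q} : IsWindowSafe W p → IsWindowSafe W q → IsWindowSafe W (fun σ i => p σ i ∧ q σ i)
  | glob {p} : IsWindowSafe W p → IsWindowSafe W (globPred p)
  | rels {a b} : IsLocal W a → IsWindowSafe W b → IsWindowSafe W (relsPred a b)

namespace IsWindowSafe

variable {W : ℕ} {p : WordPred α}

theorem mono (h : IsWindowSafe W p) {W' : ℕ} (hW : W ≤ W') : IsWindowSafe W' p := by
  induction h with
  | ofLocal h => exact .ofLocal (h.mono hW)
  | and _ _ ih₁ ih₂ => exact .and ih₁ ih₂
  | glob _ ih => exact .glob ih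
  | rels ha _ ih => exact .rels (ha.mono hW) ih

theorem shift (h : IsWindowSafe W p) : IsWindowSafe (W + 1) (shiftPred p) := by
  induction h with
  | ofLocal h => exact .ofLocal h.shift
  | and _ _ ih₁ ih₂ => exact .and ih₁ ih₂
  | glob _ ih => rw [shiftPred_globPred]; exact .glob ih
  | rels ha _ ih => rw [shiftPred_relsPred]; exact .rels ha.shift ih

end IsWindowSafe

theorem FLayer.isWindowSafe {φ : Formula α}
    (h : FLayer (fun ψ => ∃ p, ψ = Formula.atom p) φ) :
    ∃ W, IsWindowSafe W (fun σ i => Sat σ φ i) := by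
  induction h with
  | bf h =>
    obtain ⟨W, hW⟩ := h.isBoolNext.isLocal
    exact ⟨W, .ofLocal hW⟩
  | and _ _ ih₁ ih₂ =>
    obtain ⟨W₁, h₁⟩ := ih₁
    obtain ⟨W₂, h₂⟩ := ih₂
    exact ⟨max W₁ W₂, .and (h₁.mono (le_max_left _ _)) (h₂.mono (le_max_right _ _))⟩
  | next _ ih =>
    obtain ⟨W, hW⟩ := ih
    exact ⟨W + 1, hW.shift⟩
  | glob _ ih =>
    obtain ⟨W, hW⟩ := ih
    exact ⟨W, hW.glob⟩
  | rels ha _ ih =>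
    obtain ⟨W₁, h₁⟩ := ha.isBoolNext.isLocal
    obtain ⟨W₂, h₂⟩ := ih
    exact ⟨max W₁ W₂, .rels (h₁.mono (le_max_left _ _)) (h₂.mono (le_max_right _ _))⟩

structure IsWindowEmbedding (W : ℕ) (σ σ' : ℕ → Set α) (f : ℕ → ℕ) : Prop where
  monotone : Monotone f
  le_self : ∀ u, u ≤ f u
  agree_at : ∀ u, ∀ d ≤ W, σ' (f u + d) = σ (u + d)
  covered : ∀ u x, x ≤ f u → ∃ y ≤ u, ∀ d ≤ W, σ' (x + d) = σ (y + d)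

theorem IsWindowEmbedding.mono {W W' : ℕ} {σ σ' : ℕ → Set α} {f : ℕ → ℕ}
    (he : IsWindowEmbedding W' σ σ' f) (hW : W ≤ W') : IsWindowEmbedding W σ σ' f where
  monotone := he.monotone
  le_self := he.le_self
  agree_at u d hd := he.agree_at u d (hd.trans hW)
  covered u x hx :=
    (he.covered u x hx).imp fun _ ⟨hy, h⟩ => ⟨hy, fun d hd => h d (hd.trans hW)⟩

theorem IsWindowSafe.transfer {W : ℕ} {p : WordPred α} {σ σ' : ℕ → Set α} {f : ℕ → ℕ}
    (hp : IsWindowSafe W p) (he : IsWindowEmbedding W σ σ' f) :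
    ∀ y, (∀ m ≤ y, p σ m) → ∀ m ≤ f y, p σ' m := by
  induction hp with
  | ofLocal hp =>
    intro y hy m hm
    obtain ⟨x, hxy, hx⟩ := he.covered y m hm
    exact (hp σ' m σ x hx).2 (hy x hxy)
  | and _ _ ihp ihq =>
    exact fun y hy m hm =>
      ⟨ihp y (fun k hk => (hy k hk).1) m hm, ihq y (fun k hk => (hy k hk).2) m hm⟩
  | glob _ ih =>
    intro y hy _ _ j _
    exact ih j (fun k _ => hy 0 (Nat.zero_le y) k (Nat.zero_le k)) j (he.le_self j)
  | @rels a b ha _ ih =>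
    intro y hy m hm
    by_cases hall : ∀ j, b σ j
    · exact Or.inl fun j _ => ih j (fun k _ => hall k) j (he.le_self j)
    have hb : ∀ k ≤ y, b σ k := fun k hk => (hy k hk).right
    obtain ⟨n, hyn, han, hbn⟩ := (hy y le_rfl).resolve_left fun h =>
      hall fun j => (le_total y j).elim (h j) (hb j)
    have hb' : ∀ k ≤ n, b σ k := fun k hk => (le_total y k).elim (hbn k · hk) (hb k)
    exact Or.inr ⟨f n, hm.trans (he.monotone hyn),
      (ha σ' (f n) σ n (he.agree_at n)).2 han, fun k _ hk => ih n hb' k hk⟩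

theorem BLayer.transfer {χ : Formula α} (h : BLayer (fun ψ => ∃ p, ψ = Formula.atom p) χ) :
    ∃ W, ∀ σ σ' f, IsWindowEmbedding W σ σ' f → Sat σ χ 0 → Sat σ' χ 0 := by
  induction h with
  | f h =>
    obtain ⟨W, hW⟩ := h.isWindowSafe
    exact ⟨W, fun σ σ' f he hσ =>
      hW.transfer he 0 (fun m hm => Nat.le_zero.1 hm ▸ hσ) 0 (Nat.zero_le _)⟩
  | or _ _ ih₁ ih₂ =>
    obtain ⟨W₁, h₁⟩ := ih₁
    obtain ⟨W₂, h₂⟩ := ih₂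
    exact ⟨max W₁ W₂, fun σ σ' f he => Or.imp (h₁ σ σ' f (he.mono (le_max_left _ _)))
      (h₂ σ σ' f (he.mono (le_max_right _ _)))⟩
  | and _ _ ih₁ ih₂ =>
    obtain ⟨W₁, h₁⟩ := ih₁
    obtain ⟨W₂, h₂⟩ := ih₂
    exact ⟨max W₁ W₂, fun σ σ' f he => And.imp (h₁ σ σ' f (he.mono (le_max_left _ _)))
      (h₂ σ σ' f (he.mono (le_max_right _ _)))⟩

end Transfer

section Witness

theorem isWindowEmbedding_sig {W Q : ℕ} (hWQ : W < Q) :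
    IsWindowEmbedding W (sig Q Q (2 * Q)) (sig Q (3 * Q) (2 * Q))
      (fun u => if u ≤ 2 * Q then u else u + Q) where
  monotone u v huv := by simp only; split_ifs <;> omega
  le_self u := by split_ifs <;> omega
  agree_at u d hd := by simp only [sig]; split_ifs <;> first | rfl | omega
  covered u x hx := by
    -- a `W`-window of `σ'` lies before `2Q`, meets `3Q` (matched near `Q`), or is all `{p₁, p₂}`
    by_cases h₁ : x ≤ 2 * Q
    · refine ⟨x, by split_ifs at hx <;> omega, fun d hd => ?_⟩
      simp only [sig]; split_ifs <;> first | rfl | omega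
    have hu : 2 * Q < u := by split_ifs at hx <;> omega
    by_cases h₂ : x ≤ 3 * Q ∧ 3 * Q ≤ x + W
    · refine ⟨x - 2 * Q, by omega, fun d hd => ?_⟩
      simp only [sig]; split_ifs <;> first | rfl | omega
    · refine ⟨0, Nat.zero_le u, fun d hd => ?_⟩
      simp only [sig]; split_ifs <;> first | rfl | omega

theorem sig_mem_lang_phiG {Q : ℕ} (hQ : 0 < Q) : sig Q Q (2 * Q) ∈ Lang phiG := by
  intro j _
  by_cases hj : j = 2 * Q
  · refine Or.inr fun h _ => ?_
    simp only [Sat, sig]; split_ifs <;> simp_all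
  · left
    simp only [Sat, sig]; split_ifs <;> simp_all

theorem sig_not_mem_lang_phiG {Q : ℕ} (hQ : 0 < Q) : sig Q (3 * Q) (2 * Q) ∉ Lang phiG := by
  intro h
  rcases h (2 * Q) (Nat.zero_le _) with h | h
  · simp only [Sat, sig] at h; split_ifs at h <;> simp_all; omega
  · have := h (3 * Q) (by omega)
    simp only [Sat, sig] at this; split_ifs at this <;> simp_all

end Witness

theorem not_exists_isLTLEBR_lang_eq_phiG :
    ¬ ∃ χ : Formula PP, IsLTLEBR χ ∧ Lang χ = Lang phiG := by
  rintro ⟨χ, hχ, hL⟩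
  obtain ⟨W, hW⟩ := BLayer.transfer hχ
  have hin : sig (W + 1) (W + 1) (2 * (W + 1)) ∈ Lang χ := hL ▸ sig_mem_lang_phiG W.succ_pos
  exact sig_not_mem_lang_phiG W.succ_pos
    (hL ▸ hW _ _ _ (isWindowEmbedding_sig W.lt_succ_self) hin)

/-- `⟦LTLEBR⟧ ⊊ ⟦safetyLTL⟧`, witnessed by `L(G(p₁ ∨ G p₂))`. -/
theorem ltlebr_lt_safetyltl :
    ({L : Set (ℕ → Set PP) | ∃ χ : Formula PP, IsLTLEBR χ ∧ Lang χ = L} ⊂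
      {L : Set (ℕ → Set PP) | ∃ φ : Formula PP, IsSafetyLTL φ ∧ Lang φ = L}) ∧
    (∃ φ : Formula PP, IsSafetyLTL φ ∧ Lang φ = Lang phiG) ∧
    ¬ (∃ χ : Formula PP, IsLTLEBR χ ∧ Lang χ = Lang phiG) := by
  refine ⟨⟨?_, fun h => ?_⟩, ⟨phiG, isSafetyLTL_phiG, rfl⟩, not_exists_isLTLEBR_lang_eq_phiG⟩
  · rintro L ⟨χ, hχ, rfl⟩
    exact ⟨χ, hχ.isSafetyLTL, rfl⟩
  · exact not_exists_isLTLEBR_lang_eq_phiG (h ⟨phiG, isSafetyLTL_phiG, rfl⟩)
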